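/- In the explicit FRW shock-data setting, assume in addition σ̄ > 0 and γ = σ̄/(2π𝒢(1 + 6σ̄ + σ̄²)). Then for every t ∈ I: (i) r(t) = (r̄₀/R₀)·(r̄(t)/r̄₀)^{(1+3σ)/(3(1+σ))}; (ii) the shock speed in barred coordinates is r̄'(t) = 3(1 + σ)·√(σ̄/(1 + 6σ̄ + σ̄²)); and (iii) the shock speed in unbarred coordinates is r'(t) = ((1 + 3σ)/R(t))·√(σ̄/(1 + 6σ̄ + σ̄²)). -/

import Mathlib

open Real

/-- Explicit FRW shock position in barred coordinates:
`r̄(t) = √(18π𝒢γ)(1+σ)(t − t₀) + r̄₀`. -/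
noncomputable def rbarF (𝒢 γ σ t₀ rb₀ : ℝ) (t : ℝ) : ℝ :=
  Real.sqrt (18 * π * 𝒢 * γ) * (1 + σ) * (t - t₀) + rb₀

/-- Explicit FRW cosmological scale factor: `R(t) = R₀ (r̄(t)/r̄₀)^{2/(3(1+σ))}`. -/
noncomputable def RF (𝒢 γ σ t₀ rb₀ R₀ : ℝ) (t : ℝ) : ℝ :=
  R₀ * (rbarF 𝒢 γ σ t₀ rb₀ t / rb₀) ^ (2 / (3 * (1 + σ)))

/-- Shock position in unbarred FRW coordinates: `r(t) = r̄(t)/R(t)`. -/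
noncomputable def rF (𝒢 γ σ t₀ rb₀ R₀ : ℝ) (t : ℝ) : ℝ :=
  rbarF 𝒢 γ σ t₀ rb₀ t / RF 𝒢 γ σ t₀ rb₀ R₀ t

/-! With the TOV value of `γ` one has `18π𝒢γ = 9σ̄/(1+6σ̄+σ̄²)`, so `r̄` is affine with slope
`3(1+σ)√(σ̄/(1+6σ̄+σ̄²))`. Since `R ∝ r̄^{2/(3(1+σ))}`, the quotient `r = r̄/R` is a power of `r̄`
with exponent `1 - 2/(3(1+σ)) = (1+3σ)/(3(1+σ))`, and the chain rule gives `r'`. -/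

open Filter Topology

theorem sqrt_eighteen_pi_mul_div_two_pi_mul {𝒢 : ℝ} (h𝒢 : 𝒢 ≠ 0) (a D : ℝ) :
    √(18 * π * 𝒢 * (a / (2 * π * 𝒢 * D))) = 3 * √(a / D) := by
  have h : 18 * π * 𝒢 * (a / (2 * π * 𝒢 * D)) = 3 ^ 2 * (a / D) := by
    rw [div_mul_eq_div_div_swap]
    field_simp [pi_ne_zero]
    ring
  rw [h, sqrt_mul (by positivity), sqrt_sq (by norm_num)]

theorem div_mul_rpow_div_eq {x c R q : ℝ} (hc : c ≠ 0) (hx : 0 < x / c) :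
    x / (R * (x / c) ^ q) = c / R * (x / c) ^ (1 - q) := by
  rw [rpow_sub hx, rpow_one]
  field_simp

theorem hasDerivAt_div_mul_rpow_one_sub {g : ℝ → ℝ} {v c R q t : ℝ} (hg : HasDerivAt g v t)
    (hc : c ≠ 0) (hpos : 0 < g t / c) :
    HasDerivAt (fun x => c / R * (g x / c) ^ (1 - q)) ((1 - q) * v / (R * (g t / c) ^ q)) t := by
  have hpow := (hg.div_const c).rpow_const (p := 1 - q) (Or.inl hpos.ne')
  refine (hpow.const_mul (c / R)).congr_deriv ?_
  rw [sub_sub_cancel_left, rpow_neg hpos.le]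
  field_simp

section Shock

variable {𝒢 γ σ t₀ rb₀ R₀ : ℝ}

theorem hasDerivAt_rbarF (t : ℝ) :
    HasDerivAt (rbarF 𝒢 γ σ t₀ rb₀) (√(18 * π * 𝒢 * γ) * (1 + σ)) t :=
  ((((hasDerivAt_id t).sub_const t₀).const_mul _).add_const rb₀).congr_deriv (mul_one _)

theorem rF_eq_of_pos (hrb₀ : 0 < rb₀) {t : ℝ} (ht : 0 < rbarF 𝒢 γ σ t₀ rb₀ t) :
    rF 𝒢 γ σ t₀ rb₀ R₀ t = rb₀ / R₀ * (rbarF 𝒢 γ σ t₀ rb₀ t / rb₀) ^ (1 - 2 / (3 * (1 + σ))) :=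
  div_mul_rpow_div_eq hrb₀.ne' (div_pos ht hrb₀)

theorem rF_eventuallyEq (hrb₀ : 0 < rb₀) {t : ℝ} (ht : 0 < rbarF 𝒢 γ σ t₀ rb₀ t) :
    rF 𝒢 γ σ t₀ rb₀ R₀ =ᶠ[𝓝 t]
      fun x => rb₀ / R₀ * (rbarF 𝒢 γ σ t₀ rb₀ x / rb₀) ^ (1 - 2 / (3 * (1 + σ))) :=
  (continuousAt_const.eventually_lt (hasDerivAt_rbarF t).continuousAt ht).mono
    fun _ hx => rF_eq_of_pos hrb₀ hx

end Shock

theorem stmt_11_general (𝒢 γ σ σb t₀ rb₀ R₀ : ℝ) (h𝒢 : 0 < 𝒢) (hσ : 0 < 1 + σ) (hrb₀ : 0 < rb₀)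
    (hγσb : γ = σb / (2 * π * 𝒢 * (1 + 6 * σb + σb ^ 2))) :
    ∀ t : ℝ, 0 < rbarF 𝒢 γ σ t₀ rb₀ t →
      rF 𝒢 γ σ t₀ rb₀ R₀ t =
        rb₀ / R₀ * (rbarF 𝒢 γ σ t₀ rb₀ t / rb₀) ^ ((1 + 3 * σ) / (3 * (1 + σ))) ∧
      HasDerivAt (rbarF 𝒢 γ σ t₀ rb₀)
        (3 * (1 + σ) * Real.sqrt (σb / (1 + 6 * σb + σb ^ 2))) t ∧
      HasDerivAt (rF 𝒢 γ σ t₀ rb₀ R₀)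
        ((1 + 3 * σ) / RF 𝒢 γ σ t₀ rb₀ R₀ t *
          Real.sqrt (σb / (1 + 6 * σb + σb ^ 2))) t := by
  intro t ht
  have h3σ : 3 * (1 + σ) ≠ 0 := by positivity
  have hexp : (1 + 3 * σ) / (3 * (1 + σ)) = 1 - 2 / (3 * (1 + σ)) := by
    field_simp
    ring
  have hspeed : √(18 * π * 𝒢 * γ) = 3 * √(σb / (1 + 6 * σb + σb ^ 2)) := by
    rw [hγσb, sqrt_eighteen_pi_mul_div_two_pi_mul h𝒢.ne']
  have hrbar : HasDerivAt (rbarF 𝒢 γ σ t₀ rb₀) _ t := hasDerivAt_rbarF t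
  refine ⟨hexp ▸ rF_eq_of_pos hrb₀ ht, ?_, ?_⟩
  · exact hrbar.congr_deriv (by rw [hspeed]; ring)
  · refine (hasDerivAt_div_mul_rpow_one_sub hrbar hrb₀.ne' (div_pos ht hrb₀)).congr_of_eventuallyEq
      (rF_eventuallyEq hrb₀ ht) |>.congr_deriv ?_
    rw [RF, hspeed]
    field_simp
    ring

/-- with `γ = σ̄/(2π𝒢(1+6σ̄+σ̄²))`, on `I = {t : r̄(t) > 0}`:
(i) `r(t) = (r̄₀/R₀)(r̄(t)/r̄₀)^{(1+3σ)/(3(1+σ))}`; (ii) `r̄'(t) = 3(1+σ)√(σ̄/(1+6σ̄+σ̄²))`;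
(iii) `r'(t) = ((1+3σ)/R(t))√(σ̄/(1+6σ̄+σ̄²))`. -/
theorem stmt_11 (𝒢 γ σ σb t₀ rb₀ R₀ : ℝ) (h𝒢 : 0 < 𝒢) (hγ : 0 < γ) (hσ : 0 < 1 + σ)
    (hrb₀ : 0 < rb₀) (hR₀ : 0 < R₀) (hσb : 0 < σb)
    (hγσb : γ = σb / (2 * π * 𝒢 * (1 + 6 * σb + σb ^ 2))) :
    ∀ t : ℝ, 0 < rbarF 𝒢 γ σ t₀ rb₀ t →
      rF 𝒢 γ σ t₀ rb₀ R₀ t =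
        rb₀ / R₀ * (rbarF 𝒢 γ σ t₀ rb₀ t / rb₀) ^ ((1 + 3 * σ) / (3 * (1 + σ))) ∧
      HasDerivAt (rbarF 𝒢 γ σ t₀ rb₀)
        (3 * (1 + σ) * Real.sqrt (σb / (1 + 6 * σb + σb ^ 2))) t ∧
      HasDerivAt (rF 𝒢 γ σ t₀ rb₀ R₀)
        ((1 + 3 * σ) / RF 𝒢 γ σ t₀ rb₀ R₀ t *
          Real.sqrt (σb / (1 + 6 * σb + σb ^ 2))) t :=
  stmt_11_general 𝒢 γ σ σb t₀ rb₀ R₀ h𝒢 hσ hrb₀ hγσb
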